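/- arXiv:2302.01208 — 7 statements merged into one kernel-verified Lean document; each statement's English description precedes it below -/
import Mathlib

section
/- Let K be a number field regarded as a subfield of ℂ, let d ≥ 2 be an integer such that K contains a primitive d-th root of unity ε, and let v ∈ K. Set l(x) = x + v. Let h₁, h₂ be polynomials over K of degree at least 2 such that there exist polynomials P, Q ∈ ℂ[x] with h₂∘l = P∘P_d and (l⁻¹∘h₁∘l)(x) = x·Q(x^d). Then for every integer j ≥ 0 the set of pairs (a,b) ∈ K × K satisfying h₂(h₁^{∘j}(a)) = h₂(h₁^{∘j}(b)) and h₁^{∘j}(a) ≠ h₁^{∘j}(b) is infinite; indeed infinitely many such pairs lie on the line b = εa + v(1 − ε). -/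
/-!
Conjugating by `l(x) = x + v`, the hypotheses say that `h₂ ∘ l` is invariant under `x ↦ εx` and
that `l⁻¹ ∘ h₁ ∘ l` commutes with it. Hence every iterate `h₁^[j]` commutes with the rotation
`σ(x) = ε(x - v) + v` about `v`, and `h₂` is `σ`-invariant, so `(a, σ a)` is a solution whenever
`h₁^[j] a` is not the fixed point `v` of `σ`. As `h₁` is non-constant, `h₁^[j]` has finite fibres,
so all but finitely many `a ∈ K` qualify.
-/

open Polynomial

section Rotation

variable {R : Type*} [CommRing R]

def rotAbout (ε v x : R) : R := ε * (x - v) + v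

lemma rotAbout_eq_self_iff [IsDomain R] {ε v x : R} (hε : ε ≠ 1) :
    rotAbout ε v x = x ↔ x = v := by
  have : rotAbout ε v x - x = (ε - 1) * (x - v) := by unfold rotAbout; ring
  rw [← sub_eq_zero, this, mul_eq_zero, sub_eq_zero, sub_eq_zero, or_iff_right hε]

lemma rotAbout_mem {S : Type*} [SetLike S R] [SubringClass S R] {K : S} {ε v x : R}
    (hε : ε ∈ K) (hv : v ∈ K) (hx : x ∈ K) : rotAbout ε v x ∈ K :=
  add_mem (mul_mem hε (sub_mem hx hv)) hv

namespace Polynomial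

variable {p P : R[X]} {ε v : R} {d : ℕ}

lemma eval_rotAbout_of_comp_X_add_C_eq (hP : p.comp (X + C v) = P.comp (X ^ d))
    (hε : ε ^ d = 1) (x : R) : p.eval (rotAbout ε v x) = p.eval x := by
  have key (y : R) : p.eval (y + v) = P.eval (y ^ d) := by
    simpa using congrArg (eval y) hP
  rw [rotAbout, key, mul_pow, hε, one_mul, ← key, sub_add_cancel]

lemma commute_eval_rotAbout_of_conj_eq (hP : (X - C v).comp (p.comp (X + C v)) = X * P.comp (X ^ d))
    (hε : ε ^ d = 1) : Function.Commute p.eval (rotAbout ε v) := by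
  have key (y : R) : p.eval (y + v) - v = y * P.eval (y ^ d) := by
    simpa using congrArg (eval y) hP
  intro x
  have hx := key (x - v)
  rw [sub_add_cancel] at hx
  have hεx := key (ε * (x - v))
  rw [mul_pow, hε, one_mul] at hεx
  rw [rotAbout, rotAbout]
  linear_combination hεx - ε * hx

end Polynomial

end Rotation

lemma Polynomial.finite_preimage_iterate_eval_singleton {R : Type} [CommRing R] [IsDomain R]
    {p : R[X]} (hp : p.natDegree ≠ 0) (n : ℕ) (c : R) : (p.eval^[n] ⁻¹' {c}).Finite :=
  (Filter.tendstoCofinite_iff_finite_preimage_singleton _).mp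
    ⟨(p.tendstoCofinite_of_natDegree_ne_zero hp).tendsto_cofinite.iterate n⟩ c

theorem stmt1_general (K : Subfield ℂ) (d : ℕ) (hd : 2 ≤ d)
    (ε : ℂ) (hεK : ε ∈ K) (hε : IsPrimitiveRoot ε d)
    (v : ℂ) (hv : v ∈ K)
    (h₁ h₂ : Polynomial ℂ)
    (hdeg₁ : 2 ≤ h₁.natDegree)
    (P Q : Polynomial ℂ)
    (hP : h₂.comp (X + C v) = P.comp (X ^ d))
    (hQ : (X - C v).comp (h₁.comp (X + C v)) = X * Q.comp (X ^ d)) :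
    ∀ j : ℕ,
      {p : ℂ × ℂ | p.1 ∈ K ∧ p.2 ∈ K ∧
        h₂.eval ((fun x => h₁.eval x)^[j] p.1) = h₂.eval ((fun x => h₁.eval x)^[j] p.2) ∧
        (fun x => h₁.eval x)^[j] p.1 ≠ (fun x => h₁.eval x)^[j] p.2}.Infinite ∧
      {p : ℂ × ℂ | (p.1 ∈ K ∧ p.2 ∈ K ∧
        h₂.eval ((fun x => h₁.eval x)^[j] p.1) = h₂.eval ((fun x => h₁.eval x)^[j] p.2) ∧
        (fun x => h₁.eval x)^[j] p.1 ≠ (fun x => h₁.eval x)^[j] p.2) ∧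
        p.2 = ε * p.1 + v * (1 - ε)}.Infinite := by
  intro j
  have hεd : ε ^ d = 1 := hε.pow_eq_one
  have hσ : Function.Commute h₁.eval^[j] (rotAbout ε v) :=
    (commute_eval_rotAbout_of_conj_eq hQ hεd).iterate_left j
  have hfib : (h₁.eval^[j] ⁻¹' {v}).Finite :=
    finite_preimage_iterate_eval_singleton (by omega) j v
  have hKinf : (K : Set ℂ).Infinite :=
    Set.infinite_coe_iff.mp (Infinite.of_injective _ (Nat.cast_injective (R := K)))
  have hline : (fun a => (a, rotAbout ε v a)) '' ((K : Set ℂ) \ h₁.eval^[j] ⁻¹' {v}) ⊆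
      {p : ℂ × ℂ | (p.1 ∈ K ∧ p.2 ∈ K ∧
        h₂.eval ((fun x => h₁.eval x)^[j] p.1) = h₂.eval ((fun x => h₁.eval x)^[j] p.2) ∧
        (fun x => h₁.eval x)^[j] p.1 ≠ (fun x => h₁.eval x)^[j] p.2) ∧
        p.2 = ε * p.1 + v * (1 - ε)} := by
    rintro _ ⟨a, ⟨haK, hav⟩, rfl⟩
    refine ⟨⟨haK, rotAbout_mem hεK hv haK, ?_, ?_⟩, by unfold rotAbout; ring⟩
    · rw [hσ.eq, eval_rotAbout_of_comp_X_add_C_eq hP hεd]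
    · rw [hσ.eq, ne_comm, Ne, rotAbout_eq_self_iff (hε.ne_one (by omega))]
      exact hav
  have hinf := ((hKinf.sdiff hfib).image fun _ _ _ _ hab => congrArg Prod.fst hab).mono hline
  exact ⟨hinf.mono fun p hp => hp.1, hinf⟩

theorem stmt1 (K : Subfield ℂ) [NumberField K] (d : ℕ) (hd : 2 ≤ d)
    (ε : ℂ) (hεK : ε ∈ K) (hε : IsPrimitiveRoot ε d)
    (v : ℂ) (hv : v ∈ K)
    (h₁ h₂ : Polynomial ℂ)
    (hh₁K : ∀ n : ℕ, h₁.coeff n ∈ K) (hh₂K : ∀ n : ℕ, h₂.coeff n ∈ K)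
    (hdeg₁ : 2 ≤ h₁.natDegree) (hdeg₂ : 2 ≤ h₂.natDegree)
    (P Q : Polynomial ℂ)
    (hP : h₂.comp (X + C v) = P.comp (X ^ d))
    (hQ : (X - C v).comp (h₁.comp (X + C v)) = X * Q.comp (X ^ d)) :
    ∀ j : ℕ,
      {p : ℂ × ℂ | p.1 ∈ K ∧ p.2 ∈ K ∧
        h₂.eval ((fun x => h₁.eval x)^[j] p.1) = h₂.eval ((fun x => h₁.eval x)^[j] p.2) ∧
        (fun x => h₁.eval x)^[j] p.1 ≠ (fun x => h₁.eval x)^[j] p.2}.Infinite ∧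
      {p : ℂ × ℂ | (p.1 ∈ K ∧ p.2 ∈ K ∧
        h₂.eval ((fun x => h₁.eval x)^[j] p.1) = h₂.eval ((fun x => h₁.eval x)^[j] p.2) ∧
        (fun x => h₁.eval x)^[j] p.1 ≠ (fun x => h₁.eval x)^[j] p.2) ∧
        p.2 = ε * p.1 + v * (1 - ε)}.Infinite :=
  stmt1_general K d hd ε hεK hε v hv h₁ h₂ hdeg₁ P Q hP hQ
end

section
/- Let K be a number field regarded as a subfield of ℂ, let d ≥ 2 and r ≥ 2 be integers with d dividing r − 1, suppose K contains a primitive d-th root of unity ε, and let v ∈ K and u ∈ ℂ∖{0}. Set l(x) = ux + v. Let h₁, h₂ be polynomials over K of degree at least 2 such that l⁻¹∘h₁∘l = P_r and h₂∘l = P∘P_d for some polynomial P ∈ ℂ[x]. Then for every integer j ≥ 0 the set of pairs (a,b) ∈ K × K satisfying h₂(h₁^{∘j}(a)) = h₂(h₁^{∘j}(b)) and h₁^{∘j}(a) ≠ h₁^{∘j}(b) is infinite; indeed infinitely many such pairs lie on the line b = εa + v(1 − ε). -/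
/-!
Conjugating by `l` turns `h₁` into `x ↦ x ^ r` and `h₂` into a polynomial in `x ^ d`. On the
conjugated side `x` and `ε x` collide under `h₂ ∘ h₁^[j]`, because `ε ^ (r ^ j) = ε` (as
`d ∣ r ^ j - 1`) and `ε ^ d = 1`, while `ε ≠ 1` keeps their images apart for `x ≠ 0`. Transported
back by `l`, the pair `(x, ε x)` becomes `(a, ε a + v (1 - ε))` with `a ∈ K`, `a ≠ v`.
-/

open Polynomial

theorem pow_eq_self_of_dvd_sub_one {M : Type*} [Monoid M] {ε : M} {d n : ℕ} (hε : ε ^ d = 1)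
    (hn : 1 ≤ n) (hdvd : d ∣ n - 1) : ε ^ n = ε := by
  obtain ⟨k, hk⟩ := hdvd
  rw [show n = d * k + 1 by omega, pow_succ, pow_mul, hε, one_pow, one_mul]

section AffineConjugate

variable {F : Type*} [Field F] {u v : F}

theorem eval_mul_add_of_conj_eq_X_pow {h : F[X]} {r : ℕ} (hu : u ≠ 0)
    (hh : (C u⁻¹ * (X - C v)).comp (h.comp (C u * X + C v)) = X ^ r) (x : F) :
    h.eval (u * x + v) = u * x ^ r + v := by
  have hx := congrArg (eval x) hh
  simp only [eval_comp, eval_mul, eval_sub, eval_add, eval_C, eval_X, eval_pow] at hx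
  field_simp at hx
  linear_combination hx

theorem iterate_mul_add_of_conj_eq_pow {f : F → F} {r : ℕ}
    (hf : ∀ x, f (u * x + v) = u * x ^ r + v) (m : ℕ) (x : F) :
    f^[m] (u * x + v) = u * x ^ (r ^ m) + v := by
  induction m generalizing x with
  | zero => simp
  | succ m ih => rw [Function.iterate_succ_apply, hf, ih, ← pow_mul, ← pow_succ']

/-- `b = ε a + v (1 - ε)` is `l (ε · l⁻¹ a)`. -/
theorem collision_of_conj_eq_pow {f g : F → F} {Q : F → F} {ε : F} {d N : ℕ}
    (hu : u ≠ 0) (hε1 : ε ≠ 1) (hεd : ε ^ d = 1) (hεN : ε ^ N = ε)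
    (hf : ∀ x, f (u * x + v) = u * x ^ N + v) (hg : ∀ x, g (u * x + v) = Q (x ^ d))
    {a : F} (ha : a ≠ v) :
    g (f a) = g (f (ε * a + v * (1 - ε))) ∧ f a ≠ f (ε * a + v * (1 - ε)) := by
  obtain ⟨x, hx0, rfl⟩ : ∃ x, x ≠ 0 ∧ u * x + v = a :=
    ⟨u⁻¹ * (a - v), mul_ne_zero (inv_ne_zero hu) (sub_ne_zero.mpr ha), by field_simp; ring⟩
  have hfb : f (ε * (u * x + v) + v * (1 - ε)) = u * (ε * x ^ N) + v := by
    rw [show ε * (u * x + v) + v * (1 - ε) = u * (ε * x) + v by ring, hf, mul_pow, hεN]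
  rw [hf, hfb, hg, hg, mul_pow, hεd, one_mul]
  refine ⟨rfl, fun h => hε1 ?_⟩
  have hxN : x ^ N ≠ 0 := pow_ne_zero _ hx0
  have : ε * x ^ N = 1 * x ^ N := mul_left_cancel₀ hu (by linear_combination -h)
  exact mul_right_cancel₀ hxN this

end AffineConjugate

theorem stmt2_general (K : Subfield ℂ) (d r : ℕ) (hd : 2 ≤ d) (hr : 2 ≤ r)
    (hdvd : d ∣ (r - 1))
    (ε : ℂ) (hεK : ε ∈ K) (hε : IsPrimitiveRoot ε d)
    (v : ℂ) (hv : v ∈ K) (u : ℂ) (hu : u ≠ 0)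
    (h₁ h₂ : Polynomial ℂ)
    (hh₁ : (C u⁻¹ * (X - C v)).comp (h₁.comp (C u * X + C v)) = X ^ r)
    (P : Polynomial ℂ)
    (hP : h₂.comp (C u * X + C v) = P.comp (X ^ d)) :
    ∀ j : ℕ,
      {p : ℂ × ℂ | p.1 ∈ K ∧ p.2 ∈ K ∧
        h₂.eval ((fun x => h₁.eval x)^[j] p.1) = h₂.eval ((fun x => h₁.eval x)^[j] p.2) ∧
        (fun x => h₁.eval x)^[j] p.1 ≠ (fun x => h₁.eval x)^[j] p.2}.Infinite ∧
      {p : ℂ × ℂ | (p.1 ∈ K ∧ p.2 ∈ K ∧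
        h₂.eval ((fun x => h₁.eval x)^[j] p.1) = h₂.eval ((fun x => h₁.eval x)^[j] p.2) ∧
        (fun x => h₁.eval x)^[j] p.1 ≠ (fun x => h₁.eval x)^[j] p.2) ∧
        p.2 = ε * p.1 + v * (1 - ε)}.Infinite := by
  intro j
  have hεN : ε ^ r ^ j = ε :=
    pow_eq_self_of_dvd_sub_one hε.pow_eq_one (Nat.one_le_pow _ _ (by omega))
      (hdvd.trans (by simpa using Nat.sub_dvd_pow_sub_pow r 1 j))
  have hh₂ (x : ℂ) : h₂.eval (u * x + v) = P.eval (x ^ d) := by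
    simpa [eval_comp] using congrArg (eval x) hP
  have hcollide (a : ℂ) (ha : a ≠ v) := collision_of_conj_eq_pow (f := (fun x => h₁.eval x)^[j])
    (g := fun x => h₂.eval x) (Q := fun y => P.eval y) hu (hε.ne_one (by omega)) hε.pow_eq_one hεN
    (iterate_mul_add_of_conj_eq_pow (eval_mul_add_of_conj_eq_X_pow hu hh₁) j) hh₂ ha
  have hKinf : ((K : Set ℂ) \ {v}).Infinite :=
    (Set.infinite_of_injective_forall_mem Nat.cast_injective (natCast_mem K)).sdiff
      (Set.finite_singleton v)
  refine (fun hline => ⟨hline.mono fun p hp => hp.1, hline⟩) ?_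
  refine (hKinf.image (f := fun a => (a, ε * a + v * (1 - ε)))
    fun a _ b _ hab => congrArg Prod.fst hab).mono ?_
  rintro _ ⟨a, ⟨haK, hav⟩, rfl⟩
  exact ⟨⟨haK, K.add_mem (K.mul_mem hεK haK) (K.mul_mem hv (K.sub_mem K.one_mem hεK)),
    hcollide a hav⟩, rfl⟩

theorem stmt2 (K : Subfield ℂ) [NumberField K] (d r : ℕ) (hd : 2 ≤ d) (hr : 2 ≤ r)
    (hdvd : d ∣ (r - 1))
    (ε : ℂ) (hεK : ε ∈ K) (hε : IsPrimitiveRoot ε d)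
    (v : ℂ) (hv : v ∈ K) (u : ℂ) (hu : u ≠ 0)
    (h₁ h₂ : Polynomial ℂ)
    (hh₁K : ∀ n : ℕ, h₁.coeff n ∈ K) (hh₂K : ∀ n : ℕ, h₂.coeff n ∈ K)
    (hdeg₁ : 2 ≤ h₁.natDegree) (hdeg₂ : 2 ≤ h₂.natDegree)
    (hh₁ : (C u⁻¹ * (X - C v)).comp (h₁.comp (C u * X + C v)) = X ^ r)
    (P : Polynomial ℂ)
    (hP : h₂.comp (C u * X + C v) = P.comp (X ^ d)) :
    ∀ j : ℕ,
      {p : ℂ × ℂ | p.1 ∈ K ∧ p.2 ∈ K ∧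
        h₂.eval ((fun x => h₁.eval x)^[j] p.1) = h₂.eval ((fun x => h₁.eval x)^[j] p.2) ∧
        (fun x => h₁.eval x)^[j] p.1 ≠ (fun x => h₁.eval x)^[j] p.2}.Infinite ∧
      {p : ℂ × ℂ | (p.1 ∈ K ∧ p.2 ∈ K ∧
        h₂.eval ((fun x => h₁.eval x)^[j] p.1) = h₂.eval ((fun x => h₁.eval x)^[j] p.2) ∧
        (fun x => h₁.eval x)^[j] p.1 ≠ (fun x => h₁.eval x)^[j] p.2) ∧
        p.2 = ε * p.1 + v * (1 - ε)}.Infinite :=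
  stmt2_general K d r hd hr hdvd ε hεK hε v hv u hu h₁ h₂ hh₁ P hP
end

section
/- Let K be a number field regarded as a subfield of ℂ, let r ≥ 3 be an odd integer, σ ∈ {1, −1}, u ∈ ℂ∖{0} and v ∈ K. Set l(x) = ux + v. Let h₁, h₂ be polynomials over K of degree at least 2 such that l⁻¹∘h₁∘l = σ·T_r and h₂∘l = P∘T_2 for some polynomial P ∈ ℂ[x]. Then for every integer j ≥ 0 the set of pairs (a,b) ∈ K × K satisfying h₂(h₁^{∘j}(a)) = h₂(h₁^{∘j}(b)) and h₁^{∘j}(a) ≠ h₁^{∘j}(b) is infinite; indeed infinitely many such pairs lie on the line a + b = 2v. -/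
open Polynomial

/-!
Under the affine change of variable `l`, the polynomial `h₁` becomes `σ T_r`, which is odd because `r`
is odd, and `h₂` becomes `P ∘ T_2`, which is even. Since `l(-x) = 2v - l(x)`, this means that `h₁`
commutes with the reflection `a ↦ 2v - a` about `v` and that `h₂` is invariant under it. Hence for every
`a ∈ K` the pair `(a, 2v - a)` has equal values under `h₂ ∘ h₁^{∘j}`, and its two `h₁^{∘j}`-images are
distinct unless `h₁^{∘j}(a) = v`, an equation with only finitely many solutions.
-/

lemma Complex.exists_ne_zero_add_inv_eq (w : ℂ) : ∃ z : ℂ, z ≠ 0 ∧ z + z⁻¹ = w := by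
  obtain ⟨s, hs⟩ := IsAlgClosed.exists_pow_nat_eq (w ^ 2 - 4) two_pos
  have hprod : (w + s) / 2 * ((w - s) / 2) = 1 := by linear_combination -hs / 4
  refine ⟨(w + s) / 2, left_ne_zero_of_mul_eq_one hprod, ?_⟩
  rw [inv_eq_of_mul_eq_one_right hprod]
  ring

lemma eval_neg_of_eval_add_inv {p : ℂ[X]} {n : ℕ}
    (hp : ∀ z : ℂ, z ≠ 0 → p.eval (z + z⁻¹) = z ^ n + z⁻¹ ^ n) (w : ℂ) :
    p.eval (-w) = (-1) ^ n * p.eval w := by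
  obtain ⟨z, hz, rfl⟩ := Complex.exists_ne_zero_add_inv_eq w
  have hneg : -(z + z⁻¹) = -z + (-z)⁻¹ := by rw [inv_neg]; ring
  rw [hneg, hp z hz, hp (-z) (neg_ne_zero.mpr hz), inv_neg, neg_pow z, neg_pow z⁻¹]
  ring

lemma Polynomial.finite_setOf_iterate_eval_eq {R : Type*} [CommRing R] [IsDomain R] {p : R[X]}
    (hp : p.natDegree ≠ 0) (j : ℕ) (c : R) :
    {a | (fun x => p.eval x)^[j] a = c}.Finite := by
  have hdeg : 0 < (p.comp^[j] X - C c).natDegree := by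
    rw [natDegree_sub_C, natDegree_iterate_comp, natDegree_X, mul_one]
    exact pow_pos (Nat.pos_of_ne_zero hp) j
  convert finite_setOfPred_isRoot (ne_zero_of_natDegree_gt hdeg) using 1
  ext a
  simp [sub_eq_zero]

section Reflection

variable {𝕜 : Type*} [Field 𝕜] {u v : 𝕜}

lemma commute_reflection_of_conj_odd (hu : u ≠ 0) {f g : 𝕜 → 𝕜} (hg : ∀ x, g (-x) = -g x)
    (hf : ∀ x, f (u * x + v) = u * g x + v) :
    Function.Commute f (fun a => 2 * v - a) := by
  intro a
  obtain ⟨x, rfl⟩ : ∃ x, u * x + v = a := ⟨(a - v) / u, by field_simp; ring⟩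
  have hrefl : 2 * v - (u * x + v) = u * (-x) + v := by ring
  simp only [hrefl, hf, hg]
  ring

lemma reflection_invariant_of_conj_even (hu : u ≠ 0) {f g : 𝕜 → 𝕜} (hg : ∀ x, g (-x) = g x)
    (hf : ∀ x, f (u * x + v) = g x) (a : 𝕜) :
    f (2 * v - a) = f a := by
  obtain ⟨x, rfl⟩ : ∃ x, u * x + v = a := ⟨(a - v) / u, by field_simp; ring⟩
  have hrefl : 2 * v - (u * x + v) = u * (-x) + v := by ring
  rw [hrefl, hf, hf, hg]

end Reflection

theorem stmt3_general (K : Subfield ℂ)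
    (T : ℕ → Polynomial ℂ)
    (hT : ∀ (r : ℕ) (z : ℂ), z ≠ 0 → (T r).eval (z + z⁻¹) = z ^ r + z⁻¹ ^ r)
    (r : ℕ) (hodd : Odd r)
    (σ : ℂ)
    (u : ℂ) (hu : u ≠ 0) (v : ℂ) (hv : v ∈ K)
    (h₁ h₂ : Polynomial ℂ)
    (hdeg₁ : 2 ≤ h₁.natDegree)
    (hh₁ : (C u⁻¹ * (X - C v)).comp (h₁.comp (C u * X + C v)) = C σ * T r)
    (P : Polynomial ℂ)
    (hP : h₂.comp (C u * X + C v) = P.comp (T 2)) :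
    ∀ j : ℕ,
      {p : ℂ × ℂ | p.1 ∈ K ∧ p.2 ∈ K ∧
        h₂.eval ((fun x => h₁.eval x)^[j] p.1) = h₂.eval ((fun x => h₁.eval x)^[j] p.2) ∧
        (fun x => h₁.eval x)^[j] p.1 ≠ (fun x => h₁.eval x)^[j] p.2}.Infinite ∧
      {p : ℂ × ℂ | (p.1 ∈ K ∧ p.2 ∈ K ∧
        h₂.eval ((fun x => h₁.eval x)^[j] p.1) = h₂.eval ((fun x => h₁.eval x)^[j] p.2) ∧
        (fun x => h₁.eval x)^[j] p.1 ≠ (fun x => h₁.eval x)^[j] p.2) ∧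
        p.1 + p.2 = 2 * v}.Infinite := by
  intro j
  have hh₁_conj (x : ℂ) : h₁.eval (u * x + v) = u * (σ * (T r).eval x) + v := by
    have h := congrArg (eval x) hh₁
    simp only [eval_comp, eval_mul, eval_add, eval_sub, eval_C, eval_X] at h
    field_simp at h
    linear_combination h
  have hh₂_conj (x : ℂ) : h₂.eval (u * x + v) = P.eval ((T 2).eval x) := by
    simpa [eval_comp] using congrArg (eval x) hP
  have hTr_odd (x : ℂ) : σ * (T r).eval (-x) = -(σ * (T r).eval x) := by
    rw [eval_neg_of_eval_add_inv (hT r), hodd.neg_one_pow]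
    ring
  have hT₂_even (x : ℂ) : P.eval ((T 2).eval (-x)) = P.eval ((T 2).eval x) := by
    rw [eval_neg_of_eval_add_inv (hT 2), even_two.neg_one_pow, one_mul]
  have hcomm := (commute_reflection_of_conj_odd (f := fun a => h₁.eval a)
    (g := fun x => σ * (T r).eval x) hu hTr_odd hh₁_conj).iterate_left j
  have hh₂_refl := reflection_invariant_of_conj_even (f := fun a => h₂.eval a)
    (g := fun x => P.eval ((T 2).eval x)) hu hT₂_even hh₂_conj
  have hgood : ((K : Set ℂ) \ {a | (fun x => h₁.eval x)^[j] a = v}).Infinite :=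
    (Set.infinite_coe_iff.mp inferInstance).sdiff (finite_setOf_iterate_eval_eq (by omega) j v)
  refine (fun hpairs => ⟨hpairs.mono fun p hp => hp.1, hpairs⟩) ?_
  refine (hgood.image (f := fun a => (a, 2 * v - a)) fun a _ b _ h => congrArg Prod.fst h).mono ?_
  rintro _ ⟨a, ⟨haK, hav⟩, rfl⟩
  refine ⟨⟨haK, K.sub_mem (K.mul_mem (ofNat_mem K 2) hv) haK, ?_, ?_⟩, by ring⟩
  · exact (congrArg h₂.eval (hcomm a)).trans (hh₂_refl _) |>.symm
  · rw [hcomm a]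
    intro h
    exact hav (show _ = v by linear_combination h / 2)

theorem stmt3 (K : Subfield ℂ) [NumberField K]
    (T : ℕ → Polynomial ℂ)
    (hT : ∀ (r : ℕ) (z : ℂ), z ≠ 0 → (T r).eval (z + z⁻¹) = z ^ r + z⁻¹ ^ r)
    (r : ℕ) (hr : 3 ≤ r) (hodd : Odd r)
    (σ : ℂ) (hσ : σ = 1 ∨ σ = -1)
    (u : ℂ) (hu : u ≠ 0) (v : ℂ) (hv : v ∈ K)
    (h₁ h₂ : Polynomial ℂ)
    (hh₁K : ∀ n : ℕ, h₁.coeff n ∈ K) (hh₂K : ∀ n : ℕ, h₂.coeff n ∈ K)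
    (hdeg₁ : 2 ≤ h₁.natDegree) (hdeg₂ : 2 ≤ h₂.natDegree)
    (hh₁ : (C u⁻¹ * (X - C v)).comp (h₁.comp (C u * X + C v)) = C σ * T r)
    (P : Polynomial ℂ)
    (hP : h₂.comp (C u * X + C v) = P.comp (T 2)) :
    ∀ j : ℕ,
      {p : ℂ × ℂ | p.1 ∈ K ∧ p.2 ∈ K ∧
        h₂.eval ((fun x => h₁.eval x)^[j] p.1) = h₂.eval ((fun x => h₁.eval x)^[j] p.2) ∧
        (fun x => h₁.eval x)^[j] p.1 ≠ (fun x => h₁.eval x)^[j] p.2}.Infinite ∧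
      {p : ℂ × ℂ | (p.1 ∈ K ∧ p.2 ∈ K ∧
        h₂.eval ((fun x => h₁.eval x)^[j] p.1) = h₂.eval ((fun x => h₁.eval x)^[j] p.2) ∧
        (fun x => h₁.eval x)^[j] p.1 ≠ (fun x => h₁.eval x)^[j] p.2) ∧
        p.1 + p.2 = 2 * v}.Infinite :=
  stmt3_general K T hT r hodd σ u hu v hv h₁ h₂ hdeg₁ hh₁ P hP
end

section
/- Let ε and ε' be roots of unity in ℂ. If the intersection of the two sets A = {(x + x⁻¹, εx + (εx)⁻¹) : x ∈ ℂ∖{0}} and A' = {(y + y⁻¹, ε'y + (ε'y)⁻¹) : y ∈ ℂ∖{0}} is infinite, then ε' = ε or ε' = ε⁻¹. Moreover, for any root of unity ε one has the set equality {(x + x⁻¹, εx + (εx)⁻¹) : x ∈ ℂ∖{0}} = {(x + x⁻¹, ε⁻¹x + (ε⁻¹x)⁻¹) : x ∈ ℂ∖{0}}. -/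
/-!
A common point of the two curves comes from parameters `x, y ≠ 0` with `x + x⁻¹ = y + y⁻¹` and
`εx + (εx)⁻¹ = ε'y + (ε'y)⁻¹`. Since `a + a⁻¹ = b + b⁻¹` forces `b = a` or `b = a⁻¹`, unless
`ε' = ε` or `ε' = ε⁻¹` the parameter `x` must be a square root of `(εε')⁻¹` or of `ε'/ε`, so the
intersection is finite. The substitution `x ↦ x⁻¹` shows that `ε` and `ε⁻¹` give the same curve.
-/

open Set

variable {K : Type*} [Field K]

def twistedCurve (ε : K) : Set (K × K) :=
  {p | ∃ x : K, x ≠ 0 ∧ p = (x + x⁻¹, ε * x + (ε * x)⁻¹)}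

theorem finite_setOf_sq_eq (c : K) : {a : K | a ^ 2 = c}.Finite := by
  simpa only [Polynomial.mem_nthRoots two_pos] using (Polynomial.nthRoots 2 c).finite_toSet

theorem eq_or_eq_inv_of_add_inv_eq {a b : K} (ha : a ≠ 0) (hb : b ≠ 0)
    (h : a + a⁻¹ = b + b⁻¹) : a = b ∨ a = b⁻¹ := by
  have hfactor : (a - b) * (a * b - 1) = 0 := by
    field_simp at h
    linear_combination h
  rcases mul_eq_zero.mp hfactor with h | h
  · exact .inl (sub_eq_zero.mp h)
  · exact .inr (eq_inv_of_mul_eq_one_left (sub_eq_zero.mp h))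

theorem sq_eq_of_mem_twistedCurve_inter {ε ε' x y : K} (hε : ε ≠ 0) (hε' : ε' ≠ 0)
    (hx : x ≠ 0) (hy : y ≠ 0) (h₁ : x + x⁻¹ = y + y⁻¹)
    (h₂ : ε * x + (ε * x)⁻¹ = ε' * y + (ε' * y)⁻¹) :
    ε' = ε ∨ ε' = ε⁻¹ ∨ x ^ 2 = (ε * ε')⁻¹ ∨ x ^ 2 = ε' / ε := by
  have hεx : ε * x ≠ 0 := mul_ne_zero hε hx
  have hε'y : ε' * y ≠ 0 := mul_ne_zero hε' hy
  rcases eq_or_eq_inv_of_add_inv_eq hx hy h₁ with rfl | rfl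
  · rcases eq_or_eq_inv_of_add_inv_eq hεx hε'y h₂ with h | h
    · exact .inl (mul_right_cancel₀ hx h).symm
    · refine .inr (.inr (.inl ?_))
      field_simp at h ⊢
      linear_combination h
  · rcases eq_or_eq_inv_of_add_inv_eq hεx hε'y h₂ with h | h
    · refine .inr (.inr (.inr ?_))
      field_simp at h ⊢
      linear_combination h
    · refine .inr (.inl ?_)
      field_simp at h ⊢
      linear_combination h

theorem twistedCurve_inter_subset {ε ε' : K} (hε : ε ≠ 0) (hε' : ε' ≠ 0)
    (hne : ε' ≠ ε) (hne_inv : ε' ≠ ε⁻¹) :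
    twistedCurve ε ∩ twistedCurve ε' ⊆ (fun x : K => (x + x⁻¹, ε * x + (ε * x)⁻¹)) ''
      ({x | x ^ 2 = (ε * ε')⁻¹} ∪ {x | x ^ 2 = ε' / ε}) := by
  rintro p ⟨⟨x, hx, rfl⟩, ⟨y, hy, hxy⟩⟩
  obtain ⟨h₁, h₂⟩ := Prod.mk.inj hxy
  refine ⟨x, ?_, rfl⟩
  rcases sq_eq_of_mem_twistedCurve_inter hε hε' hx hy h₁ h₂ with h | h | h | h
  exacts [absurd h hne, absurd h hne_inv, .inl h, .inr h]

theorem eq_or_eq_inv_of_infinite_twistedCurve_inter {ε ε' : K} (hε : ε ≠ 0) (hε' : ε' ≠ 0)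
    (hinf : (twistedCurve ε ∩ twistedCurve ε').Infinite) : ε' = ε ∨ ε' = ε⁻¹ := by
  by_contra! hne
  exact hinf <| ((finite_setOf_sq_eq _).union (finite_setOf_sq_eq _)).image _ |>.subset
    (twistedCurve_inter_subset hε hε' hne.1 hne.2)

theorem twistedCurve_inv (ε : K) : twistedCurve ε⁻¹ = twistedCurve ε := by
  have inv_subset : ∀ δ : K, twistedCurve δ⁻¹ ⊆ twistedCurve δ := by
    rintro δ _ ⟨x, hx, rfl⟩
    refine ⟨x⁻¹, inv_ne_zero hx, ?_⟩
    simp only [inv_inv, mul_inv, Prod.mk.injEq]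
    constructor <;> ring
  exact (inv_subset ε).antisymm (by simpa only [inv_inv] using inv_subset ε⁻¹)

theorem stmt5 (ε ε' : ℂ)
    (hε : ∃ n : ℕ, 0 < n ∧ ε ^ n = 1) (hε' : ∃ n : ℕ, 0 < n ∧ ε' ^ n = 1) :
    (({p : ℂ × ℂ | ∃ x : ℂ, x ≠ 0 ∧ p = (x + x⁻¹, ε * x + (ε * x)⁻¹)} ∩
      {p : ℂ × ℂ | ∃ y : ℂ, y ≠ 0 ∧ p = (y + y⁻¹, ε' * y + (ε' * y)⁻¹)}).Infinite →
        ε' = ε ∨ ε' = ε⁻¹) ∧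
    {p : ℂ × ℂ | ∃ x : ℂ, x ≠ 0 ∧ p = (x + x⁻¹, ε * x + (ε * x)⁻¹)} =
      {p : ℂ × ℂ | ∃ x : ℂ, x ≠ 0 ∧ p = (x + x⁻¹, ε⁻¹ * x + (ε⁻¹ * x)⁻¹)} := by
  obtain ⟨n, hn, hεn⟩ := hε
  obtain ⟨m, hm, hε'm⟩ := hε'
  have hε0 : ε ≠ 0 := (IsUnit.of_pow_eq_one hεn hn.ne').ne_zero
  have hε'0 : ε' ≠ 0 := (IsUnit.of_pow_eq_one hε'm hm.ne').ne_zero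
  exact ⟨eq_or_eq_inv_of_infinite_twistedCurve_inter hε0 hε'0, (twistedCurve_inv ε).symm⟩
end

section
/- Let ε be a root of unity in ℂ with ε ∉ {1, −1}. Then the polynomial Y² − (ε + ε⁻¹)XY + X² + (ε − ε⁻¹)² is irreducible in ℂ[X,Y], and its zero set in ℂ² equals the parametrized set {(z + z⁻¹, εz + (εz)⁻¹) : z ∈ ℂ∖{0}}; that is, {(x,y) ∈ ℂ² : y² − (ε+ε⁻¹)xy + x² + (ε−ε⁻¹)² = 0} = {(z + z⁻¹, εz + (εz)⁻¹) : z ∈ ℂ∖{0}}. -/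
/-!
Writing `x = z + z⁻¹`, which is possible for every `x` since `ℂ` is algebraically closed, the
polynomial factors as `(y - (εz + (εz)⁻¹)) (y - (εz⁻¹ + (εz⁻¹)⁻¹))`; this gives the zero set.
As a monic quadratic in `Y` over the domain `ℂ[X]` it is irreducible unless it has a root there,
i.e. unless its discriminant `(ε - ε⁻¹)² (X² - 4)` is a square in `ℂ[X]`; it is not, because
`X² - 4` is squarefree and `ε ≠ ±1`.
-/

section

open Polynomial

theorem Polynomial.irreducible_X_sq_add_C_mul_X_add_C {R : Type*} [CommRing R] [IsDomain R]
    {b c : R} (h : ∀ s, discrim 1 b c ≠ s ^ 2) : Irreducible (X ^ 2 + C b * X + C c) := by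
  have hmonic : (X ^ 2 + C b * X + C c).Monic := by monicity!
  have hdeg : (X ^ 2 + C b * X + C c).natDegree = 2 := by compute_degree!
  rw [hmonic.irreducible_iff_roots_eq_zero_of_degree_le_three hdeg.ge (by omega)]
  refine Multiset.eq_zero_of_forall_notMem fun y hy ↦ h (2 * 1 * y + b) ?_
  rw [mem_roots hmonic.ne_zero, IsRoot, eval_add, eval_add, eval_mul, eval_pow, eval_C, eval_X,
    eval_C] at hy
  exact discrim_eq_sq_of_quadratic_eq_zero (by linear_combination hy)

theorem Polynomial.C_mul_X_sq_sub_C_ne_sq {K : Type*} [Field K] [NeZero (2 : K)] {u v : K}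
    (hu : u ≠ 0) (hv : v ≠ 0) (s : K[X]) : C u * X ^ 2 - C v ≠ s ^ 2 := by
  intro h
  have hsquarefree : Squarefree (X ^ 2 - C (v / u)) :=
    (separable_X_pow_sub_C _ (by exact_mod_cast two_ne_zero) (div_ne_zero hv hu)).squarefree
  have hfactor : C u * X ^ 2 - C v = C u * (X ^ 2 - C (v / u)) := by
    rw [mul_sub, ← C_mul, mul_div_cancel₀ _ hu]
  have hs : IsUnit s := hsquarefree s <| (IsUnit.dvd_mul_left (isUnit_C.2 hu.isUnit)).1 <| by
    rw [← hfactor, h, sq]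
  have hdeg_zero := natDegree_eq_zero_of_isUnit (h ▸ hs.pow 2)
  have hdeg_two : (C u * X ^ 2 - C v).natDegree = 2 := by compute_degree!
  omega

theorem MvPolynomial.irreducible_X_sq_sub_C_mul_X_mul_X_add_X_sq_add_C {K : Type*} [Field K]
    [NeZero (2 : K)] {a c : K} (ha : a ^ 2 ≠ 4) (hc : c ≠ 0) :
    Irreducible ((X 1 : MvPolynomial (Fin 2) K) ^ 2 - C a * X 0 * X 1 + X 0 ^ 2 + C c) := by
  have hequiv : (X 1 : MvPolynomial (Fin 2) K) ^ 2 - C a * X 0 * X 1 + X 0 ^ 2 + C c =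
      Bivariate.equivMvPolynomial K
        (.X ^ 2 + .C (-(.C a * .X)) * .X + .C (.X ^ 2 + .C c)) := by
    simp only [map_add, map_mul, map_neg, map_pow, Bivariate.equivMvPolynomial_X,
      Bivariate.equivMvPolynomial_C_C, Bivariate.equivMvPolynomial_C_X]
    ring
  rw [hequiv, MulEquiv.irreducible_iff]
  refine Polynomial.irreducible_X_sq_add_C_mul_X_add_C fun s ↦ ?_
  have hdiscrim :
      discrim 1 (-(Polynomial.C a * Polynomial.X)) (Polynomial.X ^ 2 + Polynomial.C c) =
        Polynomial.C (a ^ 2 - 4) * Polynomial.X ^ 2 - Polynomial.C (4 * c) := by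
    simp only [discrim, map_sub, map_mul, map_pow, map_ofNat]
    ring
  have h4 : (4 : K) ≠ 0 := by
    rw [show (4 : K) = 2 * 2 by norm_num]
    exact mul_ne_zero two_ne_zero two_ne_zero
  rw [hdiscrim]
  exact C_mul_X_sq_sub_C_ne_sq (sub_ne_zero.2 ha) (mul_ne_zero h4 hc) s

theorem sq_sub_mul_add_add_sq_eq_mul {K : Type*} [Field K] {ε z : K} (hε : ε ≠ 0) (hz : z ≠ 0)
    (y : K) :
    y ^ 2 - (ε + ε⁻¹) * (z + z⁻¹) * y + (z + z⁻¹) ^ 2 + (ε - ε⁻¹) ^ 2 =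
      (y - (ε * z + (ε * z)⁻¹)) * (y - (ε * z⁻¹ + (ε * z⁻¹)⁻¹)) := by
  field_simp
  ring

theorem IsAlgClosed.exists_add_inv_eq {K : Type*} [Field K] [IsAlgClosed K] (x : K) :
    ∃ z : K, z ≠ 0 ∧ z + z⁻¹ = x := by
  obtain ⟨z, hz⟩ := IsAlgClosed.exists_root (X ^ 2 - C x * X + 1 : K[X])
    (by rw [show (_ : K[X]).degree = 2 by compute_degree!]; decide)
  simp only [IsRoot, eval_add, eval_sub, eval_mul, eval_pow, eval_C, eval_X, eval_one] at hz
  have hz0 : z ≠ 0 := by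
    rintro rfl
    simp at hz
  refine ⟨z, hz0, ?_⟩
  field_simp
  linear_combination hz

theorem setOf_quadric_eq_setOf_exists {K : Type*} [Field K] [IsAlgClosed K] {ε : K}
    (hε : ε ≠ 0) :
    {p : K × K | p.2 ^ 2 - (ε + ε⁻¹) * p.1 * p.2 + p.1 ^ 2 + (ε - ε⁻¹) ^ 2 = 0} =
      {p : K × K | ∃ z : K, z ≠ 0 ∧ p = (z + z⁻¹, ε * z + (ε * z)⁻¹)} := by
  ext ⟨x, y⟩
  simp only [Set.mem_ofPred_eq, Prod.mk.injEq]
  constructor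
  · intro h
    obtain ⟨z, hz, rfl⟩ := IsAlgClosed.exists_add_inv_eq x
    rw [sq_sub_mul_add_add_sq_eq_mul hε hz, mul_eq_zero, sub_eq_zero, sub_eq_zero] at h
    rcases h with h | h
    · exact ⟨z, hz, rfl, h⟩
    · exact ⟨z⁻¹, inv_ne_zero hz, by rw [inv_inv, add_comm], h⟩
  · rintro ⟨z, hz, rfl, rfl⟩
    rw [sq_sub_mul_add_add_sq_eq_mul hε hz, sub_self, zero_mul]

end

open MvPolynomial

theorem stmt6 (ε : ℂ) (hε : ∃ n : ℕ, 0 < n ∧ ε ^ n = 1) (h1 : ε ≠ 1) (h2 : ε ≠ -1) :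
    Irreducible ((X 1 : MvPolynomial (Fin 2) ℂ) ^ 2 - C (ε + ε⁻¹) * X 0 * X 1
        + X 0 ^ 2 + C ((ε - ε⁻¹) ^ 2)) ∧
      {p : ℂ × ℂ | eval ![p.1, p.2] ((X 1 : MvPolynomial (Fin 2) ℂ) ^ 2
          - C (ε + ε⁻¹) * X 0 * X 1 + X 0 ^ 2 + C ((ε - ε⁻¹) ^ 2)) = 0} =
        {p : ℂ × ℂ | ∃ z : ℂ, z ≠ 0 ∧ p = (z + z⁻¹, ε * z + (ε * z)⁻¹)} ∧
      {p : ℂ × ℂ | p.2 ^ 2 - (ε + ε⁻¹) * p.1 * p.2 + p.1 ^ 2 + (ε - ε⁻¹) ^ 2 = 0} =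
        {p : ℂ × ℂ | ∃ z : ℂ, z ≠ 0 ∧ p = (z + z⁻¹, ε * z + (ε * z)⁻¹)} := by
  obtain ⟨n, hn, hpow⟩ := hε
  have hε0 : ε ≠ 0 := (IsUnit.of_pow_eq_one hpow hn.ne').ne_zero
  have hδ : ε - ε⁻¹ ≠ 0 := by
    rw [show ε - ε⁻¹ = (ε - 1) * (ε + 1) / ε by field_simp; ring]
    exact div_ne_zero (mul_ne_zero (sub_ne_zero.2 h1) (add_eq_zero_iff_eq_neg.not.2 h2)) hε0
  have ha : (ε + ε⁻¹) ^ 2 ≠ 4 := by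
    rw [← sub_ne_zero, show (ε + ε⁻¹) ^ 2 - 4 = (ε - ε⁻¹) ^ 2 by field_simp; ring]
    exact pow_ne_zero 2 hδ
  have hzeros := setOf_quadric_eq_setOf_exists hε0
  refine ⟨irreducible_X_sq_sub_C_mul_X_mul_X_add_X_sq_add_C ha (pow_ne_zero 2 hδ), ?_, hzeros⟩
  rw [← hzeros]
  ext p
  simp
end

section
/- Let h, φ ∈ ℂ[x] with deg h ≥ 2 and φ nonconstant, and let s, t ∈ ℂ with (s,t) ≠ (1,0) and s ≠ 0. Set p(x) = sx + t, and suppose φ∘p = φ and h∘p = p∘h. Then s ≠ 1; s is a primitive d-th root of unity for some integer d ≥ 2 with d dividing deg h − 1; and, setting l(x) = x + t/(1 − s), there exist polynomials P, Q ∈ ℂ[x] such that φ∘l = P∘P_d and (l⁻¹∘h∘l)(x) = x·Q(x^d). -/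
/-!
If `s = 1` then `t ≠ 0`, and `φ` would be a nonconstant polynomial with a nonzero period.
Otherwise conjugating by `l` moves the fixed point `t / (1 - s)` of `p` to `0` and turns `p`
into `x ↦ s x`, so `φ ∘ l` is invariant under `x ↦ s x` and `l⁻¹ ∘ h ∘ l` is equivariant for it.
Comparing coefficients, the `n`-th coefficient of the first can be nonzero only if `s ^ n = 1`,
and that of the second only if `s ^ n = s`. Hence `s` is a root of unity of some order `d ≥ 2`,
`φ ∘ l` is a polynomial in `x ^ d`, and `l⁻¹ ∘ h ∘ l` vanishes at `0` and is `x` times a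
polynomial in `x ^ d`; its leading term gives `d ∣ deg h - 1`.
-/

open Polynomial

namespace Polynomial

theorem expand_contract_of_dvd {R : Type*} [CommSemiring R] {p : R[X]} {d : ℕ} (hd : d ≠ 0)
    (h : ∀ n, p.coeff n ≠ 0 → d ∣ n) : expand R d (contract d p) = p := by
  ext n
  rw [coeff_expand hd.bot_lt, coeff_contract hd]
  split_ifs with hdn
  · rw [Nat.div_mul_cancel hdn]
  · exact (not_imp_comm.1 (h n) hdn).symm

section CommRing

variable {R : Type*} [CommRing R]

theorem C_mul_X_add_C_comp_X_add_C {s t c : R} (hc : s * c + t = c) :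
    (C s * X + C t).comp (X + C c) = (X + C c).comp (C s * X) := by
  have hc' : C s * C c + C t = C c := by rw [← C_mul, ← C_add, hc]
  simp only [add_comp, mul_comp, C_comp, X_comp]
  linear_combination hc'

theorem comp_X_add_C_comp_C_mul_X_of_comp_eq_self {s t c : R} (hc : s * c + t = c) {φ : R[X]}
    (hφ : φ.comp (C s * X + C t) = φ) :
    (φ.comp (X + C c)).comp (C s * X) = φ.comp (X + C c) := by
  rw [comp_assoc, ← C_mul_X_add_C_comp_X_add_C hc, ← comp_assoc, hφ]

theorem conj_comp_C_mul_X_of_commute {s t c : R} (hc : s * c + t = c) {h : R[X]}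
    (hh : h.comp (C s * X + C t) = (C s * X + C t).comp h) :
    ((X - C c).comp (h.comp (X + C c))).comp (C s * X) =
      C s * (X - C c).comp (h.comp (X + C c)) := by
  have hc' : C s * C c + C t = C c := by rw [← C_mul, ← C_add, hc]
  rw [comp_assoc, comp_assoc, ← C_mul_X_add_C_comp_X_add_C hc, ← comp_assoc h, hh]
  simp only [sub_comp, add_comp, mul_comp, X_comp, C_comp]
  linear_combination hc'

end CommRing

section IsDomain

variable {R : Type*} [CommRing R] [IsDomain R]

theorem orderOf_dvd_of_comp_C_mul_X_eq_self {p : R[X]} {s : R} (hp : p.comp (C s * X) = p)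
    {n : ℕ} (hn : p.coeff n ≠ 0) : orderOf s ∣ n := by
  refine orderOf_dvd_of_pow_eq_one (mul_left_cancel₀ hn ?_)
  simpa using congrArg (coeff · n) hp

theorem orderOf_dvd_natDegree_of_comp_C_mul_X_eq_self {p : R[X]} {s : R}
    (hp : p.comp (C s * X) = p) : orderOf s ∣ p.natDegree := by
  rcases eq_or_ne p 0 with rfl | hp0
  · simp
  · exact orderOf_dvd_of_comp_C_mul_X_eq_self hp (by simpa using hp0)

theorem exists_eq_comp_X_pow_orderOf {p : R[X]} {s : R} (hs : orderOf s ≠ 0)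
    (hp : p.comp (C s * X) = p) : ∃ P : R[X], p = P.comp (X ^ orderOf s) :=
  ⟨contract (orderOf s) p, by
    rw [← expand_eq_comp_X_pow,
      expand_contract_of_dvd hs fun _ ↦ orderOf_dvd_of_comp_C_mul_X_eq_self hp]⟩

theorem coeff_zero_eq_zero_of_comp_C_mul_X_eq_C_mul {H : R[X]} {s : R} (hs : s ≠ 1)
    (hH : H.comp (C s * X) = C s * H) : H.coeff 0 = 0 := by
  have h0 : H.coeff 0 = s * H.coeff 0 := by simpa using congrArg (coeff · 0) hH
  exact by_contra fun h ↦ hs ((mul_eq_right₀ h).1 h0.symm)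

theorem divX_comp_C_mul_X_of_comp_C_mul_X_eq_C_mul {H : R[X]} {s : R} (hs : s ≠ 0)
    (hH : H.comp (C s * X) = C s * H) : H.divX.comp (C s * X) = H.divX := by
  ext n
  have h := congrArg (coeff · (n + 1)) hH
  simp only [comp_C_mul_X_coeff, coeff_C_mul, pow_succ] at h
  rw [comp_C_mul_X_coeff, coeff_divX]
  exact mul_right_cancel₀ hs (by linear_combination h)

end IsDomain

theorem eq_zero_of_comp_X_add_C_eq_self {R : Type*} [CommRing R] [IsDomain R] [CharZero R]
    {p : R[X]} (hp : 0 < p.natDegree) {t : R} (h : p.comp (X + C t) = p) : t = 0 := by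
  by_contra ht
  have hper : Function.Periodic p.eval t := fun x ↦ by simpa using congrArg (eval x) h
  have hconst : p = C (p.eval 0) := by
    refine eq_of_infinite_eval_eq _ _ (Set.Infinite.mono ?_ (Set.infinite_range_of_injective
      fun m n hmn ↦ Nat.cast_injective (mul_right_cancel₀ ht hmn : (m : R) = n)))
    rintro _ ⟨n, rfl⟩
    simpa using hper.nat_mul_eq n
  rw [hconst, natDegree_C] at hp
  exact hp.false

end Polynomial

theorem stmt9_general (h φ : Polynomial ℂ) (hφ : 0 < φ.degree)
    (s t : ℂ) (hst : (s, t) ≠ (1, 0)) (hs : s ≠ 0)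
    (hφp : φ.comp (C s * X + C t) = φ)
    (hhp : h.comp (C s * X + C t) = (C s * X + C t).comp h) :
    s ≠ 1 ∧ ∃ d : ℕ, 2 ≤ d ∧ IsPrimitiveRoot s d ∧ d ∣ (h.natDegree - 1) ∧
      ∃ P Q : Polynomial ℂ,
        φ.comp (X + C (t / (1 - s))) = P.comp (X ^ d) ∧
        (X - C (t / (1 - s))).comp (h.comp (X + C (t / (1 - s)))) = X * Q.comp (X ^ d) := by
  have hφdeg : 0 < φ.natDegree := natDegree_pos_iff_degree_pos.2 hφ
  have hs1 : s ≠ 1 := by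
    rintro rfl
    exact hst (Prod.ext rfl (eq_zero_of_comp_X_add_C_eq_self hφdeg (by simpa using hφp)))
  set c := t / (1 - s)
  have hc : s * c + t = c := by
    have : 1 - s ≠ 0 := sub_ne_zero.2 hs1.symm
    simp only [c]
    field_simp
    ring
  set H := (X - C c).comp (h.comp (X + C c))
  have hψ := comp_X_add_C_comp_C_mul_X_of_comp_eq_self hc hφp
  have hH : H.comp (C s * X) = C s * H := conj_comp_C_mul_X_of_commute hc hhp
  have hHdivX := divX_comp_C_mul_X_of_comp_C_mul_X_eq_C_mul hs hH
  have hd : orderOf s ≠ 0 := by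
    have := orderOf_dvd_natDegree_of_comp_C_mul_X_eq_self hψ
    rw [natDegree_comp, natDegree_X_add_C, mul_one] at this
    exact (Nat.pos_of_dvd_of_pos this hφdeg).ne'
  obtain ⟨P, hP⟩ := exists_eq_comp_X_pow_orderOf hd hψ
  obtain ⟨Q, hQ⟩ := exists_eq_comp_X_pow_orderOf hd hHdivX
  refine ⟨hs1, orderOf s, ?_, IsPrimitiveRoot.orderOf s, ?_, P, Q, hP, ?_⟩
  · have : orderOf s ≠ 1 := fun h1 ↦ hs1 (orderOf_eq_one_iff.1 h1)
    omega
  · have hHdeg : H.natDegree = h.natDegree := by simp [H, natDegree_comp]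
    simpa [natDegree_divX_eq_natDegree_tsub_one, hHdeg] using
      orderOf_dvd_natDegree_of_comp_C_mul_X_eq_self hHdivX
  · rw [← X_mul_divX_add H, coeff_zero_eq_zero_of_comp_C_mul_X_eq_C_mul hs1 hH, hQ]
    simp

theorem stmt9 (h φ : Polynomial ℂ) (hdeg : 2 ≤ h.natDegree) (hφ : 0 < φ.degree)
    (s t : ℂ) (hst : (s, t) ≠ (1, 0)) (hs : s ≠ 0)
    (hφp : φ.comp (C s * X + C t) = φ)
    (hhp : h.comp (C s * X + C t) = (C s * X + C t).comp h) :
    s ≠ 1 ∧ ∃ d : ℕ, 2 ≤ d ∧ IsPrimitiveRoot s d ∧ d ∣ (h.natDegree - 1) ∧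
      ∃ P Q : Polynomial ℂ,
        φ.comp (X + C (t / (1 - s))) = P.comp (X ^ d) ∧
        (X - C (t / (1 - s))).comp (h.comp (X + C (t / (1 - s)))) = X * Q.comp (X ^ d) :=
  stmt9_general h φ hφ s t hst hs hφp hhp
end

section
/- Let m and n be nonzero integers and ν ∈ ℂ∖{0}. If there exists a nonconstant polynomial φ ∈ ℂ[x] such that φ(x) = φ(y) for every pair (x,y) ∈ (ℂ∖{0})² with x^m y^n = ν, then n = −m. -/
/-!
Choose `c` with `c ^ n = ν`. The points `(t ^ n, c * t ^ (-m))`, `t ≠ 0`, lie on the curve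
`x ^ m * y ^ n = ν`, so `φ (t ^ n) = φ (c * t ^ (-m))`. Replacing `t` by `t⁻¹` we may take `n > 0`.
If `-m < 0`, the left side is unbounded as `t → ∞` while the right side stays bounded; if `-m ≥ 0`,
the polynomials `φ ∘ X ^ n` and `φ ∘ (c X ^ (-m))` coincide and their degrees give `n = -m`.
-/

open Polynomial Filter Bornology

theorem IsAlgClosed.exists_zpow_eq {k : Type*} [Field k] [IsAlgClosed k] {n : ℤ} (hn : n ≠ 0)
    (x : k) : ∃ z : k, z ^ n = x := by
  obtain ⟨z, hz⟩ := IsAlgClosed.exists_pow_nat_eq x (Int.natAbs_pos.mpr hn)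
  rcases Int.natAbs_eq n with h | h
  · exact ⟨z, by rw [h, zpow_natCast, hz]⟩
  · exact ⟨z⁻¹, by rw [h, inv_zpow', neg_neg, zpow_natCast, hz]⟩

section Domain

variable {R : Type*} [CommRing R] [IsDomain R] [Infinite R]

theorem Polynomial.eq_of_forall_ne_zero_eval_eq {p q : R[X]}
    (h : ∀ t ≠ 0, p.eval t = q.eval t) : p = q :=
  eq_of_infinite_eval_eq p q <| (Set.finite_singleton 0).infinite_compl.mono fun t ht => h t ht

theorem Polynomial.eq_of_forall_eval_pow_eq_eval_mul_pow {φ : R[X]} (hφ : 0 < φ.degree)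
    {a b : ℕ} {c : R} (hc : c ≠ 0) (h : ∀ t ≠ 0, φ.eval (t ^ a) = φ.eval (c * t ^ b)) :
    a = b := by
  have hcomp : φ.comp (X ^ a) = φ.comp (C c * X ^ b) :=
    eq_of_forall_ne_zero_eval_eq fun t ht => by simpa using h t ht
  have hdeg := congrArg natDegree hcomp
  rw [natDegree_comp, natDegree_comp, natDegree_X_pow, natDegree_C_mul_X_pow _ _ hc] at hdeg
  exact Nat.eq_of_mul_eq_mul_left (natDegree_pos_iff_degree_pos.mpr hφ) hdeg

end Domain

section NormedField

variable {K : Type*} [NontriviallyNormedField K]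

theorem Polynomial.not_forall_eval_pow_eq_eval_mul_inv_pow {φ : K[X]} (hφ : 0 < φ.degree)
    {a : ℕ} (ha : 0 < a) (b : ℕ) (c : K) :
    ¬ ∀ t ≠ 0, φ.eval (t ^ a) = φ.eval (c * t⁻¹ ^ b) := by
  intro h
  have hunbdd : Tendsto (fun t : K => ‖φ.eval (t ^ a)‖) (cobounded K) atTop :=
    φ.tendsto_norm_atTop hφ <| by
      simpa only [norm_pow, Function.comp_def] using
        (tendsto_pow_atTop ha.ne').comp tendsto_norm_cobounded_atTop
  have hbdd : Tendsto (fun t : K => φ.eval (c * t⁻¹ ^ b)) (cobounded K)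
      (nhds (φ.eval (c * 0 ^ b))) :=
    ((φ.continuous.comp (continuous_const.mul (continuous_pow b))).tendsto 0).comp
      tendsto_inv₀_cobounded
  refine not_tendsto_atTop_of_tendsto_nhds (hbdd.norm.congr' ?_) hunbdd
  filter_upwards [eventually_ne_cobounded 0] with t ht
  rw [h t ht]

theorem Polynomial.eq_of_forall_eval_zpow_eq_eval_mul_zpow {φ : K[X]} (hφ : 0 < φ.degree)
    {n k : ℤ} (hn : n ≠ 0) {c : K} (hc : c ≠ 0)
    (h : ∀ t ≠ 0, φ.eval (t ^ n) = φ.eval (c * t ^ k)) : k = n := by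
  wlog hpos : 0 < n generalizing n k
  · have hneg : -k = -n := this (neg_ne_zero.mpr hn) (fun t ht => by
      simpa only [inv_zpow', neg_neg] using h t⁻¹ (inv_ne_zero ht)) (by omega)
    exact neg_inj.mp hneg
  lift n to ℕ using hpos.le
  obtain ⟨b, rfl | rfl⟩ := Int.eq_nat_or_neg k
  · simp only [zpow_natCast] at h
    exact congrArg _ (eq_of_forall_eval_pow_eq_eval_mul_pow hφ hc h).symm
  · exact absurd (by simpa only [zpow_natCast, zpow_neg, inv_pow] using h)
      (not_forall_eval_pow_eq_eval_mul_inv_pow hφ (by omega) b c)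

end NormedField

theorem stmt19_general (m n : ℤ) (hn : n ≠ 0) (ν : ℂ) (hν : ν ≠ 0)
    (hφ : ∃ φ : Polynomial ℂ, 0 < φ.degree ∧
      ∀ x y : ℂ, x ≠ 0 → y ≠ 0 → x ^ m * y ^ n = ν → φ.eval x = φ.eval y) :
    n = -m := by
  obtain ⟨φ, hφ, hfiber⟩ := hφ
  obtain ⟨c, rfl⟩ := IsAlgClosed.exists_zpow_eq hn ν
  have hc : c ≠ 0 := (zpow_ne_zero_iff hn).mp hν
  have hcurve : ∀ t ≠ (0 : ℂ), φ.eval (t ^ n) = φ.eval (c * t ^ (-m)) := fun t ht =>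
    hfiber _ _ (zpow_ne_zero _ ht) (mul_ne_zero hc (zpow_ne_zero _ ht)) <| by
      rw [mul_zpow, ← zpow_mul, ← zpow_mul, mul_left_comm, ← zpow_add₀ ht, neg_mul,
        mul_comm n m, add_neg_cancel, zpow_zero, mul_one]
  exact (eq_of_forall_eval_zpow_eq_eval_mul_zpow hφ hn hc hcurve).symm

theorem stmt19 (m n : ℤ) (hm : m ≠ 0) (hn : n ≠ 0) (ν : ℂ) (hν : ν ≠ 0)
    (hφ : ∃ φ : Polynomial ℂ, 0 < φ.degree ∧
      ∀ x y : ℂ, x ≠ 0 → y ≠ 0 → x ^ m * y ^ n = ν → φ.eval x = φ.eval y) :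
    n = -m :=
  stmt19_general m n hn ν hν hφ
end
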